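/- (Dziobek's characterization) Let m₁, m₂, m₃, m₄ > 0 and let q = (q₁, q₂, q₃, q₄) be four pairwise distinct points in ℝ² that do not lie on a common line, with Σ m_i q_i = 0, and whose mutual-distance vector r(q) = (‖q₁−q₂‖, ‖q₁−q₃‖, ‖q₁−q₄‖, ‖q₂−q₃‖, ‖q₂−q₄‖, ‖q₃−q₄‖) satisfies I(r(q)) = 1. Then q is a central configuration (i.e. there is λ ∈ ℝ with λ m_i q_i = Σ_{j≠i} m_i m_j (q_j − q_i)/‖q_j − q_i‖³ for all i) if and only if there exist real numbers λ', η such that ∇U(r(q)) = λ' M ∇I(r(q)) + η ∇H(r(q)), i.e. r(q) is a critical point of U restricted to 𝒩 = {r ∈ 𝒢 : I(r) = 1, H(r) = 0}. -/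

import Mathlib

open Finset

/-- The Cayley–Menger determinant as a function of
`r = (r₁₂, r₁₃, r₁₄, r₂₃, r₂₄, r₃₄) ∈ ℝ⁶`. -/
noncomputable def Hvec (r : Fin 6 → ℝ) : ℝ :=
  Matrix.det !![(0:ℝ), 1, 1, 1, 1;
                1, 0, (r 0)^2, (r 1)^2, (r 2)^2;
                1, (r 0)^2, 0, (r 3)^2, (r 4)^2;
                1, (r 1)^2, (r 3)^2, 0, (r 5)^2;
                1, (r 2)^2, (r 4)^2, (r 5)^2, 0]

/-- The Newtonian potential `U` as a function of `r ∈ ℝ⁶`. -/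
noncomputable def Uvec (m1 m2 m3 m4 : ℝ) (r : Fin 6 → ℝ) : ℝ :=
  m1*m2/(r 0) + m1*m3/(r 1) + m1*m4/(r 2) +
  m2*m3/(r 3) + m2*m4/(r 4) + m3*m4/(r 5)

/-- The moment of inertia `I` as a function of `r ∈ ℝ⁶`. -/
noncomputable def Ivec (m1 m2 m3 m4 : ℝ) (r : Fin 6 → ℝ) : ℝ :=
  (1/(2*(m1 + m2 + m3 + m4))) *
    (m1*m2*(r 0)^2 + m1*m3*(r 1)^2 + m1*m4*(r 2)^2 +
     m2*m3*(r 3)^2 + m2*m4*(r 4)^2 + m3*m4*(r 5)^2)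

/-- The mutual-distance vector
`r(q) = (r₁₂, r₁₃, r₁₄, r₂₃, r₂₄, r₃₄)` of a planar configuration `q`. -/
noncomputable def rvec (q : Fin 4 → EuclideanSpace ℝ (Fin 2)) : Fin 6 → ℝ :=
  ![dist (q 0) (q 1), dist (q 0) (q 2), dist (q 0) (q 3),
    dist (q 1) (q 2), dist (q 1) (q 3), dist (q 2) (q 3)]

/-!
Let `Δ i` be twice the signed area of the triangle formed by the three points other than `q i`,
with signs alternating in `i`, so that `∑ Δ i = 0` and `∑ Δ i • q i = 0`. For four non-collinear
points in the plane every affine dependency is a multiple of `Δ`.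

Since the centre of mass is at the origin, the central-configuration equation at body `i` says
that the coefficients `m i * m j * (r_ij⁻³ + λ / M)` form an affine dependency; as they are
symmetric in `i, j`, they must equal `σ Δ i Δ j`. On the other side, at a planar configuration
`∂H/∂r_ij = -16 r_ij Δ i Δ j`, so dividing the `ij`-th Lagrange equation by `-r_ij` gives the same
system, with `λ' = λ / M` and `σ = 16 η`.
-/

namespace Dziobek

local notation "E²" => EuclideanSpace ℝ (Fin 2)

theorem exists_eq_smul_of_mul_comm {ι K : Type*} [Field K] {x Δ : ι → K} (hΔ : Δ ≠ 0)
    (h : ∀ i j, x i * Δ j = x j * Δ i) : ∃ μ : K, x = μ • Δ := by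
  obtain ⟨k, hk⟩ := Function.ne_iff.1 hΔ
  refine ⟨x k / Δ k, funext fun i => ?_⟩
  rw [Pi.smul_apply, smul_eq_mul, div_mul_eq_mul_div, eq_div_iff hk, h]

theorem smul_eq_sum_erase_iff {ι V : Type*} [Fintype ι] [DecidableEq ι] [NormedAddCommGroup V]
    [NormedSpace ℝ V] {m : ι → ℝ} {q : ι → V} (hcm : ∑ j, m j • q j = 0) (lam : ℝ) (i : ι) :
    ((lam * ∑ j, m j) * m i) • q i =
        ∑ j ∈ univ.erase i, (m i * m j / ‖q j - q i‖ ^ 3) • (q j - q i) ↔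
      ∑ j, (m i * m j * (‖q j - q i‖⁻¹ ^ 3 + lam)) • (q j - q i) = 0 := by
  have hmass : ∑ j, m j • (q j - q i) = -(∑ j, m j) • q i := by
    simp [smul_sub, sum_sub_distrib, hcm, sum_smul]
  have hsplit : ∑ j, (m i * m j * (‖q j - q i‖⁻¹ ^ 3 + lam)) • (q j - q i) =
      ∑ j ∈ univ.erase i, (m i * m j / ‖q j - q i‖ ^ 3) • (q j - q i)
        - ((lam * ∑ j, m j) * m i) • q i := by
    rw [sum_erase _ (by simp)]
    simp only [mul_add, add_smul, sum_add_distrib, div_eq_mul_inv, inv_pow]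
    rw [sub_eq_add_neg]
    congr 1
    calc ∑ j, (m i * m j * lam) • (q j - q i) = (m i * lam) • ∑ j, m j • (q j - q i) := by
          rw [smul_sum]; congr 1; ext j; rw [smul_smul]; ring_nf
      _ = -(((lam * ∑ j, m j) * m i) • q i) := by
          rw [hmass, smul_smul, ← neg_smul]; ring_nf
  rw [hsplit, sub_eq_zero, eq_comm]

def cross (u v : E²) : ℝ := u 0 * v 1 - u 1 * v 0

theorem exists_eq_smul_of_cross_eq_zero {v w : E²} (hv : v ≠ 0) (h : cross v w = 0) :
    ∃ t : ℝ, w = t • v := by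
  have hv' : v 0 ≠ 0 ∨ v 1 ≠ 0 := by
    by_contra! h0
    exact hv (by ext c; fin_cases c <;> simp [h0])
  unfold cross at h
  rcases hv' with h0 | h1
  · refine ⟨w 0 / v 0, ?_⟩
    ext c; fin_cases c
    · simp [h0]
    · simp; field_simp; linear_combination h
  · refine ⟨w 1 / v 1, ?_⟩
    ext c; fin_cases c
    · simp; field_simp; linear_combination -h
    · simp [h1]

theorem collinear_of_cross_sub_eq_zero {ι : Type*} (q : ι → E²) (i₀ : ι)
    (h : ∀ i j, cross (q i - q i₀) (q j - q i₀) = 0) : Collinear ℝ (Set.range q) := by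
  by_cases hconst : ∀ i, q i = q i₀
  · refine (collinear_singleton ℝ (q i₀)).subset ?_
    rintro _ ⟨i, rfl⟩
    exact hconst i
  push Not at hconst
  obtain ⟨i, hi⟩ := hconst
  refine (collinear_iff_of_mem (Set.mem_range_self i₀)).2 ⟨q i - q i₀, ?_⟩
  rintro _ ⟨j, rfl⟩
  obtain ⟨t, ht⟩ := exists_eq_smul_of_cross_eq_zero (sub_ne_zero.2 hi) (h i j)
  exact ⟨t, by rw [vadd_eq_add, ← ht, sub_add_cancel]⟩

def areaWeight (q : Fin 4 → E²) : Fin 4 → ℝ :=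
  ![cross (q 2 - q 1) (q 3 - q 1), -cross (q 2 - q 0) (q 3 - q 0),
    cross (q 1 - q 0) (q 3 - q 0), -cross (q 1 - q 0) (q 2 - q 0)]

theorem sum_areaWeight (q : Fin 4 → E²) : ∑ i, areaWeight q i = 0 := by
  simp [Fin.sum_univ_four, areaWeight, cross]
  ring

theorem sum_areaWeight_smul (q : Fin 4 → E²) : ∑ i, areaWeight q i • q i = 0 := by
  ext c; fin_cases c <;> simp [Fin.sum_univ_four, areaWeight, cross] <;> ring

theorem areaWeight_ne_zero {q : Fin 4 → E²} (hq : ¬Collinear ℝ (Set.range q)) :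
    areaWeight q ≠ 0 := by
  intro h0
  have h1 : cross (q 2 - q 0) (q 3 - q 0) = 0 := by simpa [areaWeight] using congrFun h0 1
  have h2 : cross (q 1 - q 0) (q 3 - q 0) = 0 := by simpa [areaWeight] using congrFun h0 2
  have h3 : cross (q 1 - q 0) (q 2 - q 0) = 0 := by simpa [areaWeight] using congrFun h0 3
  refine hq (collinear_of_cross_sub_eq_zero q 0 fun i j => ?_)
  fin_cases i <;> fin_cases j <;> simp [cross] at h1 h2 h3 ⊢ <;>
    ring_nf at h1 h2 h3 ⊢ <;> linarith

/-- Each `hjk` below is the cofactor expansion of `det (∑ aᵢ (1, qᵢ), (1, qₗ), (1, qₘ)) = 0`,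
where `l, m` are the two indices other than `j, k`. -/
theorem mul_areaWeight_comm {q : Fin 4 → E²} {a : Fin 4 → ℝ} (ha : ∑ i, a i = 0)
    (haq : ∑ i, a i • q i = 0) (i j : Fin 4) :
    a i * areaWeight q j = a j * areaWeight q i := by
  simp only [Fin.sum_univ_four] at ha
  have hx : a 0 * q 0 0 + a 1 * q 1 0 + a 2 * q 2 0 + a 3 * q 3 0 = 0 := by
    simpa [Fin.sum_univ_four] using congrArg (· 0) haq
  have hy : a 0 * q 0 1 + a 1 * q 1 1 + a 2 * q 2 1 + a 3 * q 3 1 = 0 := by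
    simpa [Fin.sum_univ_four] using congrArg (· 1) haq
  have h01 : a 0 * areaWeight q 1 = a 1 * areaWeight q 0 := by
    simp only [areaWeight, cross, Matrix.cons_val, PiLp.sub_apply]
    linear_combination
      -((q 2 0 * q 3 1 - q 3 0 * q 2 1) * ha + (q 2 1 - q 3 1) * hx + (q 3 0 - q 2 0) * hy)
  have h02 : a 0 * areaWeight q 2 = a 2 * areaWeight q 0 := by
    simp only [areaWeight, cross, Matrix.cons_val, PiLp.sub_apply]
    linear_combination
      (q 1 0 * q 3 1 - q 3 0 * q 1 1) * ha + (q 1 1 - q 3 1) * hx + (q 3 0 - q 1 0) * hy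
  have h03 : a 0 * areaWeight q 3 = a 3 * areaWeight q 0 := by
    simp only [areaWeight, cross, Matrix.cons_val, PiLp.sub_apply]
    linear_combination
      -((q 1 0 * q 2 1 - q 2 0 * q 1 1) * ha + (q 1 1 - q 2 1) * hx + (q 2 0 - q 1 0) * hy)
  have h12 : a 1 * areaWeight q 2 = a 2 * areaWeight q 1 := by
    simp only [areaWeight, cross, Matrix.cons_val, PiLp.sub_apply]
    linear_combination
      -((q 0 0 * q 3 1 - q 3 0 * q 0 1) * ha + (q 0 1 - q 3 1) * hx + (q 3 0 - q 0 0) * hy)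
  have h13 : a 1 * areaWeight q 3 = a 3 * areaWeight q 1 := by
    simp only [areaWeight, cross, Matrix.cons_val, PiLp.sub_apply]
    linear_combination
      (q 0 0 * q 2 1 - q 2 0 * q 0 1) * ha + (q 0 1 - q 2 1) * hx + (q 2 0 - q 0 0) * hy
  have h23 : a 2 * areaWeight q 3 = a 3 * areaWeight q 2 := by
    simp only [areaWeight, cross, Matrix.cons_val, PiLp.sub_apply]
    linear_combination
      -((q 0 0 * q 1 1 - q 1 0 * q 0 1) * ha + (q 0 1 - q 1 1) * hx + (q 1 0 - q 0 0) * hy)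
  fin_cases i <;> fin_cases j <;> simp <;> linarith

theorem exists_eq_smul_areaWeight {q : Fin 4 → E²} (hq : ¬Collinear ℝ (Set.range q))
    {a : Fin 4 → ℝ} (ha : ∑ i, a i = 0) (haq : ∑ i, a i • q i = 0) :
    ∃ μ : ℝ, a = μ • areaWeight q :=
  exists_eq_smul_of_mul_comm (areaWeight_ne_zero hq) (mul_areaWeight_comm ha haq)

theorem sum_smul_sub_eq_zero_iff {q : Fin 4 → E²} (hq : ¬Collinear ℝ (Set.range q))
    {c : Fin 4 → Fin 4 → ℝ} (hc : ∀ i j, c i j = c j i) :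
    (∀ i, ∑ j, c i j • (q j - q i) = 0) ↔
      ∃ σ : ℝ, ∀ i j, i ≠ j → c i j = σ * areaWeight q i * areaWeight q j := by
  constructor
  · intro h
    -- subtracting the row sums on the diagonal turns every row into an affine dependency of `q`
    set C : Fin 4 → Fin 4 → ℝ := fun i j => c i j - if i = j then ∑ l, c i l else 0
    have hrow : ∀ i, ∃ μ : ℝ, C i = μ • areaWeight q := fun i => by
      refine exists_eq_smul_areaWeight hq ?_ ?_
      · simp [C, sum_sub_distrib]
      · simpa [C, sub_smul, sum_sub_distrib, ite_smul, smul_sub, sum_smul] using h i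
    choose μ hμ using hrow
    have hCsymm : ∀ i j, C i j = C j i := fun i j => by
      by_cases hij : i = j
      · rw [hij]
      · simp [C, hij, Ne.symm hij, hc i j]
    obtain ⟨σ, hσ⟩ := exists_eq_smul_of_mul_comm (areaWeight_ne_zero hq) fun i j => by
      simpa [hμ] using hCsymm i j
    refine ⟨σ, fun i j hij => ?_⟩
    have hCij := congrFun (hμ i) j
    simp only [C, hij, if_false, sub_zero] at hCij
    rw [hCij, hσ]
    simp [mul_assoc]
  · rintro ⟨σ, hσ⟩ i
    calc ∑ j, c i j • (q j - q i)
        = ∑ j, (σ * areaWeight q i * areaWeight q j) • (q j - q i) := by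
          refine sum_congr rfl fun j _ => ?_
          by_cases hij : i = j
          · simp [hij]
          · rw [hσ i j hij]
      _ = (σ * areaWeight q i) • (∑ j, areaWeight q j • q j - (∑ j, areaWeight q j) • q i) := by
          simp [smul_sub, sum_sub_distrib, smul_sum, sum_smul, mul_smul]
      _ = 0 := by rw [sum_areaWeight_smul, sum_areaWeight]; simp


def pairFst : Fin 6 → Fin 4 := ![0, 0, 0, 1, 1, 2]

def pairSnd : Fin 6 → Fin 4 := ![1, 2, 3, 2, 3, 3]

theorem pairFst_ne_pairSnd (k : Fin 6) : pairFst k ≠ pairSnd k := by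
  fin_cases k <;> decide

theorem forall_ne_iff_forall_pair {P : Fin 4 → Fin 4 → Prop} (hP : ∀ i j, P i j → P j i) :
    (∀ i j, i ≠ j → P i j) ↔ ∀ k, P (pairFst k) (pairSnd k) := by
  refine ⟨fun h k => h _ _ (pairFst_ne_pairSnd k), fun h i j hij => ?_⟩
  have hpair : ∃ k, (pairFst k = i ∧ pairSnd k = j) ∨ (pairFst k = j ∧ pairSnd k = i) := by
    revert i j; decide
  obtain ⟨k, ⟨rfl, rfl⟩ | ⟨rfl, rfl⟩⟩ := hpair
  exacts [h k, hP _ _ (h k)]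

theorem rvec_apply (q : Fin 4 → E²) (k : Fin 6) :
    rvec q k = dist (q (pairFst k)) (q (pairSnd k)) := by
  fin_cases k <;> rfl

theorem rvec_ne_zero {q : Fin 4 → E²} (hq : ∀ i j, i ≠ j → q i ≠ q j) (k : Fin 6) :
    rvec q k ≠ 0 := by
  rw [rvec_apply]
  exact dist_ne_zero.2 (hq _ _ (pairFst_ne_pairSnd k))

theorem continuousLinearMap_eq_iff_apply_single {ι : Type*} [Fintype ι] [DecidableEq ι]
    {L L' : (ι → ℝ) →L[ℝ] ℝ} : L = L' ↔ ∀ k, L (Pi.single k 1) = L' (Pi.single k 1) := by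
  refine ⟨fun h k => h ▸ rfl, fun h => ContinuousLinearMap.coe_injective ?_⟩
  refine LinearMap.pi_ext fun k x => ?_
  have hx : Pi.single k x = x • (Pi.single k 1 : ι → ℝ) := by simp [← Pi.single_smul]
  simp [hx, h k]

theorem hasFDerivAt_sum_apply {ι : Type*} [Fintype ι] {φ : ι → ℝ → ℝ} {φ' : ι → ℝ}
    {r : ι → ℝ} (h : ∀ j, HasDerivAt (φ j) (φ' j) (r j)) :
    HasFDerivAt (fun x : ι → ℝ => ∑ j, φ j (x j))
      (∑ j, φ' j • ContinuousLinearMap.proj (R := ℝ) (φ := fun _ : ι => ℝ) j) r :=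
  HasFDerivAt.fun_sum fun j _ => (h j).comp_hasFDerivAt r (hasFDerivAt_apply j r)

theorem fderiv_sum_apply_single {ι : Type*} [Fintype ι] [DecidableEq ι] {φ : ι → ℝ → ℝ}
    {φ' : ι → ℝ} {r : ι → ℝ} (h : ∀ j, HasDerivAt (φ j) (φ' j) (r j)) (k : ι) :
    fderiv ℝ (fun x : ι → ℝ => ∑ j, φ j (x j)) r (Pi.single k 1) = φ' k := by
  simp [(hasFDerivAt_sum_apply h).fderiv, Pi.single_apply]

theorem Uvec_eq_sum (m : Fin 4 → ℝ) :
    Uvec (m 0) (m 1) (m 2) (m 3) = fun r => ∑ k, m (pairFst k) * m (pairSnd k) * (r k)⁻¹ := by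
  ext r
  simp [Uvec, Fin.sum_univ_succ, pairFst, pairSnd, div_eq_mul_inv]
  ring

theorem Ivec_eq_sum (m : Fin 4 → ℝ) :
    Ivec (m 0) (m 1) (m 2) (m 3) = fun r =>
      ∑ k, m (pairFst k) * m (pairSnd k) / (2 * ∑ i, m i) * r k ^ 2 := by
  ext r
  simp [Ivec, Fin.sum_univ_succ, pairFst, pairSnd, div_eq_mul_inv]
  ring

theorem fderiv_Uvec_single (m : Fin 4 → ℝ) {r : Fin 6 → ℝ} (hr : ∀ k, r k ≠ 0) (k : Fin 6) :
    fderiv ℝ (Uvec (m 0) (m 1) (m 2) (m 3)) r (Pi.single k 1) =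
      -(m (pairFst k) * m (pairSnd k) / r k ^ 2) := by
  rw [Uvec_eq_sum, fderiv_sum_apply_single fun j => (hasDerivAt_inv (hr j)).const_mul _]
  ring

theorem fderiv_Ivec_single (m : Fin 4 → ℝ) (r : Fin 6 → ℝ) (k : Fin 6) :
    fderiv ℝ (Ivec (m 0) (m 1) (m 2) (m 3)) r (Pi.single k 1) =
      m (pairFst k) * m (pairSnd k) * r k / ∑ i, m i := by
  rw [Ivec_eq_sum, fderiv_sum_apply_single fun j => (hasDerivAt_pow 2 (r j)).const_mul _]
  by_cases hM : ∑ i, m i = 0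
  · simp [hM]
  · field_simp
    ring

/-- `288 V²` for a tetrahedron with squared edge lengths `s`, edges ordered as in `rvec`. -/
def cayleyMengerPoly (s : Fin 6 → ℝ) : ℝ :=
  2 * (s 0 * s 5 * (s 1 + s 2 + s 3 + s 4 - s 0 - s 5) +
    s 1 * s 4 * (s 0 + s 2 + s 3 + s 5 - s 1 - s 4) +
    s 2 * s 3 * (s 0 + s 1 + s 4 + s 5 - s 2 - s 3) -
    s 0 * s 1 * s 3 - s 0 * s 2 * s 4 - s 1 * s 2 * s 5 - s 3 * s 4 * s 5)

theorem Hvec_eq (r : Fin 6 → ℝ) : Hvec r = cayleyMengerPoly (fun k => r k ^ 2) := by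
  simp [Hvec, cayleyMengerPoly, Matrix.det_succ_row_zero, Fin.sum_univ_succ, Fin.succAbove]
  ring

theorem differentiable_Hvec : Differentiable ℝ Hvec := by
  rw [funext Hvec_eq]
  unfold cayleyMengerPoly
  fun_prop

theorem dist_sq_eq_fin_two (x y : E²) : dist x y ^ 2 = (x 0 - y 0) ^ 2 + (x 1 - y 1) ^ 2 := by
  simp [EuclideanSpace.dist_sq_eq, Fin.sum_univ_two, Real.dist_eq, sq_abs]

/-- `k.rev` indexes the edge opposite to edge `k`. -/
theorem cayleyMengerPoly_add_single (q : Fin 4 → E²) (k : Fin 6) (u : ℝ) :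
    cayleyMengerPoly ((fun j => rvec q j ^ 2) + u • Pi.single k 1) =
      cayleyMengerPoly (fun j => rvec q j ^ 2)
        - 8 * u * areaWeight q (pairFst k) * areaWeight q (pairSnd k)
        - 2 * u ^ 2 * rvec q k.rev ^ 2 := by
  simp only [rvec_apply, dist_sq_eq_fin_two]
  fin_cases k <;> simp [cayleyMengerPoly, areaWeight, cross, pairFst, pairSnd] <;> ring

theorem fderiv_Hvec_rvec_single (q : Fin 4 → E²) (k : Fin 6) :
    fderiv ℝ Hvec (rvec q) (Pi.single k 1) =
      -16 * rvec q k * areaWeight q (pairFst k) * areaWeight q (pairSnd k) := by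
  set r := rvec q
  have hsq (t : ℝ) : (fun j => (r + t • Pi.single k 1 : Fin 6 → ℝ) j ^ 2) =
      (fun j => r j ^ 2) + (2 * r k * t + t ^ 2) • Pi.single k 1 := by
    ext j
    by_cases hj : j = k
    · subst hj; simp; ring
    · simp [hj]
  have hu : HasDerivAt (fun t : ℝ => 2 * r k * t + t ^ 2) (2 * r k) 0 := by
    simpa using ((hasDerivAt_id (0 : ℝ)).const_mul (2 * r k)).fun_add (hasDerivAt_pow 2 (0 : ℝ))
  have hline : HasLineDerivAt ℝ Hvec
      (-16 * r k * areaWeight q (pairFst k) * areaWeight q (pairSnd k)) r (Pi.single k 1) := by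
    unfold HasLineDerivAt
    convert ((hu.const_mul (8 * areaWeight q (pairFst k) * areaWeight q (pairSnd k))).const_sub
      (cayleyMengerPoly fun j => r j ^ 2)).fun_sub
        ((hu.fun_pow 2).const_mul (2 * r k.rev ^ 2)) using 1
    · ext t
      rw [Hvec_eq, hsq, cayleyMengerPoly_add_single]
      ring
    · simp
      ring
  exact (differentiable_Hvec r).hasFDerivAt.hasLineDerivAt _ |>.unique hline

theorem centralConfiguration_iff {m : Fin 4 → ℝ} {q : Fin 4 → E²} (hM : ∑ i, m i ≠ 0)
    (hcm : ∑ i, m i • q i = 0) (hq : ¬Collinear ℝ (Set.range q)) :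
    (∃ lam : ℝ, ∀ i, (lam * m i) • q i =
        ∑ j ∈ univ.erase i, (m i * m j / ‖q j - q i‖ ^ 3) • (q j - q i)) ↔
      ∃ lam' σ : ℝ, ∀ k, m (pairFst k) * m (pairSnd k) * ((rvec q k)⁻¹ ^ 3 + lam') =
        σ * areaWeight q (pairFst k) * areaWeight q (pairSnd k) := by
  have hscale : (∃ lam : ℝ, ∀ i, (lam * m i) • q i =
        ∑ j ∈ univ.erase i, (m i * m j / ‖q j - q i‖ ^ 3) • (q j - q i)) ↔
      ∃ lam' : ℝ, ∀ i, ((lam' * ∑ j, m j) * m i) • q i =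
        ∑ j ∈ univ.erase i, (m i * m j / ‖q j - q i‖ ^ 3) • (q j - q i) :=
    ⟨fun ⟨lam, h⟩ => ⟨lam / ∑ j, m j, by rwa [div_mul_cancel₀ _ hM]⟩, fun ⟨lam', h⟩ => ⟨_, h⟩⟩
  rw [hscale]
  refine exists_congr fun lam' => ?_
  simp_rw [smul_eq_sum_erase_iff hcm]
  rw [sum_smul_sub_eq_zero_iff hq fun i j => by rw [norm_sub_rev]; ring]
  refine exists_congr fun σ => ?_
  rw [forall_ne_iff_forall_pair fun i j h => by rw [norm_sub_rev]; linear_combination h]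
  simp_rw [rvec_apply, dist_eq_norm, norm_sub_rev (q (pairFst _))]

theorem lagrange_iff (m : Fin 4 → ℝ) {q : Fin 4 → E²} (hM : ∑ i, m i ≠ 0)
    (hr : ∀ k, rvec q k ≠ 0) :
    (∃ lam' eta : ℝ, fderiv ℝ (Uvec (m 0) (m 1) (m 2) (m 3)) (rvec q) =
        (lam' * (m 0 + m 1 + m 2 + m 3)) • fderiv ℝ (Ivec (m 0) (m 1) (m 2) (m 3)) (rvec q)
          + eta • fderiv ℝ Hvec (rvec q)) ↔
      ∃ lam' σ : ℝ, ∀ k, m (pairFst k) * m (pairSnd k) * ((rvec q k)⁻¹ ^ 3 + lam') =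
        σ * areaWeight q (pairFst k) * areaWeight q (pairSnd k) := by
  rw [Fin.sum_univ_four] at hM
  simp_rw [continuousLinearMap_eq_iff_apply_single, add_apply, smul_apply, smul_eq_mul,
    fderiv_Uvec_single m hr, fderiv_Ivec_single, fderiv_Hvec_rvec_single, Fin.sum_univ_four]
  refine exists_congr fun lam' => ⟨fun ⟨eta, h⟩ => ⟨16 * eta, fun k => ?_⟩,
    fun ⟨σ, h⟩ => ⟨σ / 16, fun k => ?_⟩⟩
  all_goals
    have hk := h k
    field_simp [hr k] at hk ⊢
    linear_combination -hk

end Dziobek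

theorem dziobek_characterization_general (m : Fin 4 → ℝ) (hm : ∀ i, 0 < m i)
    (q : Fin 4 → EuclideanSpace ℝ (Fin 2))
    (hdist : ∀ i j, i ≠ j → q i ≠ q j)
    (hnoncol : ¬ Collinear ℝ (Set.range q))
    (hcm : ∑ i, m i • q i = 0) :
    (∃ lam : ℝ, ∀ i, (lam * m i) • q i =
        ∑ j ∈ Finset.univ.erase i, ((m i * m j) / ‖q j - q i‖^3) • (q j - q i)) ↔
    (∃ lam' eta : ℝ,
        fderiv ℝ (Uvec (m 0) (m 1) (m 2) (m 3)) (rvec q) =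
          (lam' * (m 0 + m 1 + m 2 + m 3)) •
              fderiv ℝ (Ivec (m 0) (m 1) (m 2) (m 3)) (rvec q)
            + eta • fderiv ℝ Hvec (rvec q)) := by
  have hM : ∑ i, m i ≠ 0 := (sum_pos (fun i _ => hm i) univ_nonempty).ne'
  rw [Dziobek.centralConfiguration_iff hM hcm hnoncol,
    Dziobek.lagrange_iff m hM (Dziobek.rvec_ne_zero hdist)]

/-- Dziobek's characterization: a normalized planar non-collinear four-body
configuration with center of mass at the origin is a central configuration if
and only if its distance vector is a critical point of `U` restricted to
`𝒩 = {I = 1, H = 0}` (via Lagrange multipliers). -/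
theorem dziobek_characterization (m : Fin 4 → ℝ) (hm : ∀ i, 0 < m i)
    (q : Fin 4 → EuclideanSpace ℝ (Fin 2))
    (hdist : ∀ i j, i ≠ j → q i ≠ q j)
    (hnoncol : ¬ Collinear ℝ (Set.range q))
    (hcm : ∑ i, m i • q i = 0)
    (hI : Ivec (m 0) (m 1) (m 2) (m 3) (rvec q) = 1) :
    (∃ lam : ℝ, ∀ i, (lam * m i) • q i =
        ∑ j ∈ Finset.univ.erase i, ((m i * m j) / ‖q j - q i‖^3) • (q j - q i)) ↔
    (∃ lam' eta : ℝ,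
        fderiv ℝ (Uvec (m 0) (m 1) (m 2) (m 3)) (rvec q) =
          (lam' * (m 0 + m 1 + m 2 + m 3)) •
              fderiv ℝ (Ivec (m 0) (m 1) (m 2) (m 3)) (rvec q)
            + eta • fderiv ℝ Hvec (rvec q)) :=
  dziobek_characterization_general m hm q hdist hnoncol hcm
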